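/- Lemma 4.1: Let {S_j}_{j=1}^N be an IFS of contractive similitudes on ℝ^d with augmented tree (X, 𝓔). If (X, 𝓔) is of bounded degree, then S_x ≠ S_y for any two distinct finite words x, y ∈ Σ*. -/

import Mathlib

open Metric Filter

namespace HypIFS

/-- Euclidean space `ℝ^d`. -/
abbrev Euc (d : ℕ) := EuclideanSpace ℝ (Fin d)

/-- The distance `dist(A, B)` between two subsets of a metric space. -/
noncomputable def setDist {E : Type*} [PseudoMetricSpace E] (A B : Set E) : ℝ :=
  sInf (Set.image2 dist A B)

variable {d N : ℕ}

/-- For a word `x = i₁⋯i_k`, the composition `S_x = S_{i₁} ∘ ⋯ ∘ S_{i_k}`. -/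
def sWord (S : Fin N → Euc d → Euc d) : List (Fin N) → Euc d → Euc d :=
  fun w => w.foldr (fun i f => S i ∘ f) id

/-- For a word `x = i₁⋯i_k`, the product `r_x = r_{i₁} ⋯ r_{i_k}` of contraction ratios. -/
def rWord (ρ : Fin N → ℝ) (w : List (Fin N)) : ℝ := (w.map ρ).prod

/-- The coding level `𝓙_n = {i₁⋯i_k : r_{i₁⋯i_k} ≤ rⁿ < r_{i₁⋯i_{k−1}}}`,
with `𝓙_0` consisting of the empty word. -/
def Jlevel (ρ : Fin N → ℝ) (r : ℝ) (n : ℕ) : Set (List (Fin N)) :=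
  if n = 0 then {([] : List (Fin N))}
  else {w | rWord ρ w ≤ r ^ n ∧ r ^ n < rWord ρ w.dropLast}

/-- The vertical (parent–child) edge relation: `x ∈ 𝓙_n` is the initial segment
of `y ∈ 𝓙_{n+1}`. -/
def EV (ρ : Fin N → ℝ) (r : ℝ) (x y : List (Fin N)) : Prop :=
  ∃ n : ℕ, x ∈ Jlevel ρ r n ∧ y ∈ Jlevel ρ r (n + 1) ∧ x <+: y

/-- The horizontal edge relation: `x ≠ y` in the same level `𝓙_n` with
`dist(K_x, K_y) ≤ κ rⁿ`. -/
def EH (S : Fin N → Euc d → Euc d) (ρ : Fin N → ℝ) (r κ : ℝ) (K : Set (Euc d))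
    (x y : List (Fin N)) : Prop :=
  ∃ n : ℕ, x ∈ Jlevel ρ r n ∧ y ∈ Jlevel ρ r n ∧ x ≠ y ∧
    setDist (sWord S x '' K) (sWord S y '' K) ≤ κ * r ^ n

/-- The augmented tree `(X, 𝓔)`, `𝓔 = 𝓔_v ∪ 𝓔_h`, as a graph on the word space
(words belonging to no level `𝓙_n` are isolated vertices). -/
def augIFS (S : Fin N → Euc d → Euc d) (ρ : Fin N → ℝ) (r κ : ℝ) (K : Set (Euc d)) :
    SimpleGraph (List (Fin N)) where
  Adj x y := (EV ρ r x y ∨ EV ρ r y x ∨ EH S ρ r κ K x y ∨ EH S ρ r κ K y x) ∧ x ≠ y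
  symm := ⟨by
    rintro x y ⟨h1 | h2 | h3 | h4, hne⟩
    · exact ⟨Or.inr (Or.inl h1), hne.symm⟩
    · exact ⟨Or.inl h2, hne.symm⟩
    · exact ⟨Or.inr (Or.inr (Or.inr h3)), hne.symm⟩
    · exact ⟨Or.inr (Or.inr (Or.inl h4)), hne.symm⟩⟩
  loopless := ⟨fun x h => h.2 rfl⟩

/-- A graph is of bounded degree if `sup_x deg(x) < ∞`. -/
def BddDeg {V : Type*} (G : SimpleGraph V) : Prop :=
  ∃ M : ℕ, ∀ x : V, {y | G.Adj x y}.Finite ∧ {y | G.Adj x y}.ncard ≤ M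

/-!
If `S_x = S_y` with `x ≠ y`, comparing distances gives `r_x = r_y`. Then for every `k` the `k + 1`
distinct words `xˢ yᵏ⁻ˢ j₀` (`s ≤ k`, `r_{j₀} = r`) have the same ratio, hence lie in one level
`𝓙_m`, and they all induce the same map, hence the same cell `K_w`. So they are pairwise joined
by horizontal edges, and the degree is unbounded.
-/

open List in
/-- The word `xˢ yᵏ⁻ˢ`. -/
def mixedPow {α : Type*} (x y : List α) (k s : ℕ) : List α :=
  (replicate s x).flatten ++ (replicate (k - s) y).flatten

section Words

open List

variable {α : Type*}

lemma flatten_replicate_add (l : List α) (m n : ℕ) :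
    (replicate (m + n) l).flatten = (replicate m l).flatten ++ (replicate n l).flatten := by
  rw [replicate_add, flatten_append]

lemma eq_of_flatten_replicate_eq {x y : List α} {e : ℕ} (he : e ≠ 0)
    (h : (replicate e x).flatten = (replicate e y).flatten) : x = y := by
  have hlen : x.length = y.length := by
    have := congrArg length h
    simp only [length_flatten, map_replicate, sum_replicate, smul_eq_mul] at this
    exact Nat.eq_of_mul_eq_mul_left (Nat.pos_of_ne_zero he) this
  obtain ⟨e, rfl⟩ := Nat.exists_eq_succ_of_ne_zero he
  rw [replicate_succ, replicate_succ, flatten_cons, flatten_cons] at h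
  exact (append_inj h hlen).1

lemma mixedPow_injOn {x y : List α} (hxy : x ≠ y) (k : ℕ) :
    Set.InjOn (mixedPow x y k) (Set.Iic k) := by
  suffices key : ∀ s e, s + e ≤ k → mixedPow x y k s = mixedPow x y k (s + e) → e = 0 by
    intro s hs s' hs' h
    rcases le_total s s' with hle | hle
    · obtain ⟨e, rfl⟩ := Nat.exists_eq_add_of_le hle
      simp [key s e hs' h]
    · obtain ⟨e, rfl⟩ := Nat.exists_eq_add_of_le hle
      simp [key s' e hs h.symm]
  intro s e hk h
  by_contra he
  have hy : (replicate (k - s) y).flatten =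
      (replicate e y).flatten ++ (replicate (k - (s + e)) y).flatten := by
    rw [← flatten_replicate_add]; congr 2; omega
  rw [mixedPow, mixedPow, hy, flatten_replicate_add, append_assoc] at h
  exact hxy (eq_of_flatten_replicate_eq he (append_cancel_right (append_cancel_left h))).symm

end Words

lemma not_bddDeg_of_forall_exists_finset {V : Type*} {G : SimpleGraph V}
    (h : ∀ M : ℕ, ∃ x, ∃ t : Finset V, M < t.card ∧ ∀ y ∈ t, G.Adj x y) : ¬ BddDeg G := by
  rintro ⟨M, hM⟩
  obtain ⟨x, t, hcard, hadj⟩ := h M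
  have : t.card ≤ {y | G.Adj x y}.ncard := by
    rw [← Set.ncard_coe_finset]
    exact Set.ncard_le_ncard (fun y hy => hadj y hy) (hM x).1
  have := (hM x).2
  omega

lemma setDist_self {E : Type*} [PseudoMetricSpace E] {A : Set E} (hA : A.Nonempty) :
    setDist A A = 0 := by
  obtain ⟨a, ha⟩ := hA
  have hnonneg : ∀ z ∈ Set.image2 dist A A, 0 ≤ z := by
    rintro z ⟨u, -, v, -, rfl⟩
    exact dist_nonneg
  refine le_antisymm ?_ (Real.sInf_nonneg hnonneg)
  exact csInf_le ⟨0, hnonneg⟩ ⟨a, ha, a, ha, dist_self a⟩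

lemma exists_pow_mem_Ico {r t : ℝ} (hr0 : 0 < r) (hr1 : r < 1) (ht0 : 0 < t) (ht1 : t ≤ 1) :
    ∃ m : ℕ, m ≠ 0 ∧ t * r ≤ r ^ m ∧ r ^ m < t := by
  classical
  have hex : ∃ n : ℕ, r ^ n < t := exists_pow_lt_of_lt_one ht0 hr1
  have hn : r ^ Nat.find hex < t := Nat.find_spec hex
  have hn0 : Nat.find hex ≠ 0 := by
    intro h
    rw [h, pow_zero] at hn
    linarith
  have hprev : t ≤ r ^ (Nat.find hex - 1) := not_lt.1 (Nat.find_min hex (by omega))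
  refine ⟨Nat.find hex, hn0, ?_, hn⟩
  calc t * r ≤ r ^ (Nat.find hex - 1) * r := by gcongr
    _ = r ^ Nat.find hex := by rw [← pow_succ, Nat.sub_add_cancel (Nat.pos_of_ne_zero hn0)]

section Ratios

variable (ρ : Fin N → ℝ)

@[simp]
lemma rWord_nil : rWord ρ [] = 1 := rfl

@[simp]
lemma rWord_cons (j : Fin N) (w : List (Fin N)) : rWord ρ (j :: w) = ρ j * rWord ρ w := by
  simp [rWord]

@[simp]
lemma rWord_append (u v : List (Fin N)) : rWord ρ (u ++ v) = rWord ρ u * rWord ρ v := by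
  simp [rWord]

lemma rWord_flatten_replicate (w : List (Fin N)) (n : ℕ) :
    rWord ρ (List.replicate n w).flatten = rWord ρ w ^ n := by
  induction n with
  | zero => rfl
  | succ n ih => rw [List.replicate_succ', List.flatten_concat, rWord_append, ih, pow_succ]

lemma rWord_mixedPow {x y : List (Fin N)} (hxy : rWord ρ x = rWord ρ y) {k s : ℕ} (hs : s ≤ k) :
    rWord ρ (mixedPow x y k s) = rWord ρ x ^ k := by
  rw [mixedPow, rWord_append, rWord_flatten_replicate, rWord_flatten_replicate, ← hxy, ← pow_add,
    Nat.add_sub_cancel' hs]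

variable {ρ}

lemma rWord_pos (hρ0 : ∀ j, 0 < ρ j) (w : List (Fin N)) : 0 < rWord ρ w := by
  induction w with
  | nil => exact one_pos
  | cons j w ih => rw [rWord_cons]; exact mul_pos (hρ0 j) ih

lemma rWord_le_one (hρ0 : ∀ j, 0 < ρ j) (hρ1 : ∀ j, ρ j < 1) (w : List (Fin N)) :
    rWord ρ w ≤ 1 := by
  induction w with
  | nil => exact le_rfl
  | cons j w ih => rw [rWord_cons]; exact mul_le_one₀ (hρ1 j).le (rWord_pos hρ0 w).le ih

lemma append_mem_Jlevel {r : ℝ} {m : ℕ} (hm : m ≠ 0) {w : List (Fin N)} {j : Fin N}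
    (hj : ρ j = r) (hle : rWord ρ w * r ≤ r ^ m) (hlt : r ^ m < rWord ρ w) :
    w ++ [j] ∈ Jlevel ρ r m := by
  rw [Jlevel, if_neg hm]
  exact ⟨by simpa [hj] using hle, by rwa [List.dropLast_concat]⟩

end Ratios

section Maps

variable (S : Fin N → Euc d → Euc d)

lemma sWord_append (u v : List (Fin N)) : sWord S (u ++ v) = sWord S u ∘ sWord S v := by
  induction u with
  | nil => rfl
  | cons j u ih => exact congrArg (S j ∘ ·) ih

lemma sWord_flatten_replicate (w : List (Fin N)) (n : ℕ) :
    sWord S (List.replicate n w).flatten = (sWord S w)^[n] := by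
  induction n with
  | zero => rfl
  | succ n ih => rw [List.replicate_succ, List.flatten_cons, sWord_append, ih,
      Function.iterate_succ']

lemma sWord_mixedPow {x y : List (Fin N)} (hxy : sWord S x = sWord S y) {k s : ℕ} (hs : s ≤ k) :
    sWord S (mixedPow x y k s) = (sWord S y)^[k] := by
  rw [mixedPow, sWord_append, sWord_flatten_replicate, sWord_flatten_replicate, hxy,
    ← Function.iterate_add, Nat.add_sub_cancel' hs]

variable {S} {ρ : Fin N → ℝ}

lemma dist_sWord (hsim : ∀ j a b, dist (S j a) (S j b) = ρ j * dist a b)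
    (w : List (Fin N)) (a b : Euc d) :
    dist (sWord S w a) (sWord S w b) = rWord ρ w * dist a b := by
  induction w with
  | nil => simp [sWord]
  | cons j w ih =>
    change dist (S j (sWord S w a)) (S j (sWord S w b)) = _
    rw [hsim, ih, rWord_cons, mul_assoc]

lemma rWord_eq_of_sWord_eq [Nontrivial (Euc d)]
    (hsim : ∀ j a b, dist (S j a) (S j b) = ρ j * dist a b)
    {x y : List (Fin N)} (hxy : sWord S x = sWord S y) : rWord ρ x = rWord ρ y := by
  obtain ⟨a, b, hab⟩ := exists_pair_ne (Euc d)
  have h := (dist_sWord hsim x a b).symm.trans (hxy ▸ dist_sWord hsim y a b)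
  exact mul_right_cancel₀ (dist_ne_zero.2 hab) h

end Maps

lemma augIFS_adj_of_sWord_eq {S : Fin N → Euc d → Euc d} {ρ : Fin N → ℝ} {r κ : ℝ}
    {K : Set (Euc d)} (hr0 : 0 < r) (hκ : 0 < κ) (hKne : K.Nonempty) {m : ℕ}
    {u v : List (Fin N)} (hu : u ∈ Jlevel ρ r m) (hv : v ∈ Jlevel ρ r m) (huv : u ≠ v)
    (hS : sWord S u = sWord S v) : (augIFS S ρ r κ K).Adj u v := by
  refine ⟨Or.inr (Or.inr (Or.inl ⟨m, hu, hv, huv, ?_⟩)), huv⟩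
  rw [hS, setDist_self (hKne.image _)]
  positivity

lemma not_bddDeg_augIFS_of_sWord_eq {S : Fin N → Euc d → Euc d} {ρ : Fin N → ℝ} {r κ : ℝ}
    {K : Set (Euc d)} (hρ0 : ∀ j, 0 < ρ j) (hρ1 : ∀ j, ρ j < 1) {j₀ : Fin N} (hj₀ : ρ j₀ = r)
    (hκ : 0 < κ) (hKne : K.Nonempty) {x y : List (Fin N)} (hxy : x ≠ y)
    (hS : sWord S x = sWord S y) (hρxy : rWord ρ x = rWord ρ y) :
    ¬ BddDeg (augIFS S ρ r κ K) := by
  classical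
  have hr0 : 0 < r := hj₀ ▸ hρ0 j₀
  refine not_bddDeg_of_forall_exists_finset fun M => ?_
  set k := M + 1
  have hx0 : 0 < rWord ρ x := rWord_pos hρ0 x
  obtain ⟨m, hm, hle, hlt⟩ := exists_pow_mem_Ico hr0 (hj₀ ▸ hρ1 j₀) (pow_pos hx0 k)
    (pow_le_one₀ hx0.le (rWord_le_one hρ0 hρ1 x))
  set v : ℕ → List (Fin N) := fun s => mixedPow x y k s ++ [j₀]
  have hv_mem : ∀ s ≤ k, v s ∈ Jlevel ρ r m := fun s hs =>
    append_mem_Jlevel hm hj₀ (by rwa [rWord_mixedPow ρ hρxy hs])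
      (by rwa [rWord_mixedPow ρ hρxy hs])
  have hv_inj : Set.InjOn v (Set.Iic k) := fun s hs s' hs' h =>
    mixedPow_injOn hxy k hs hs' (List.append_cancel_right h)
  have hv_map : ∀ s ≤ k, sWord S (v s) = (sWord S y)^[k] ∘ S j₀ := fun s hs => by
    simp only [v, sWord_append, sWord_mixedPow S hS hs]
    rfl
  have hIcc : (Finset.Icc 1 k : Set ℕ) ⊆ Set.Iic k := fun s hs => (Finset.mem_Icc.1 hs).2
  refine ⟨v 0, (Finset.Icc 1 k).image v, ?_, ?_⟩
  · rw [Finset.card_image_of_injOn (hv_inj.mono hIcc), Nat.card_Icc]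
    omega
  · simp only [Finset.mem_image, Finset.mem_Icc]
    rintro _ ⟨s, ⟨hs1, hsk⟩, rfl⟩
    exact augIFS_adj_of_sWord_eq hr0 hκ hKne (hv_mem 0 (Nat.zero_le k)) (hv_mem s hsk)
      (fun h => by have := hv_inj (Nat.zero_le k) hsk h; omega)
      ((hv_map 0 (Nat.zero_le k)).trans (hv_map s hsk).symm)

theorem bounded_degree_implies_distinct_maps_general {d N : ℕ} (hN : 2 ≤ N)
    (S : Fin N → Euc d → Euc d) (ρ : Fin N → ℝ) (r κ : ℝ) (K : Set (Euc d))
    (hρ0 : ∀ j, 0 < ρ j) (hρ1 : ∀ j, ρ j < 1)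
    (hsim : ∀ j a b, dist (S j a) (S j b) = ρ j * dist a b)
    (hr : IsLeast (Set.range ρ) r) (hκ : 0 < κ)
    (hKne : K.Nonempty)
    (hbd : BddDeg (augIFS S ρ r κ K)) :
    ∀ x y : List (Fin N), x ≠ y → sWord S x ≠ sWord S y := by
  intro x y hxy hS
  obtain ⟨j₀, hj₀⟩ := hr.1
  rcases subsingleton_or_nontrivial (Euc d) with _ | _
  · -- On a one-point space all maps agree, and `S_{j₀ j₁}`, `S_{j₁ j₀}` also have equal ratios.
    obtain ⟨j₁, hj₁⟩ := Fintype.exists_ne_of_one_lt_card (by rwa [Fintype.card_fin]) j₀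
    exact not_bddDeg_augIFS_of_sWord_eq hρ0 hρ1 hj₀ hκ hKne (x := [j₀, j₁]) (y := [j₁, j₀])
      (by simp [hj₁.symm]) (Subsingleton.elim _ _) (by simp [mul_comm]) hbd
  · exact not_bddDeg_augIFS_of_sWord_eq hρ0 hρ1 hj₀ hκ hKne hxy hS
      (rWord_eq_of_sWord_eq hsim hS) hbd

/-- Lemma 4.1: if the augmented tree of an IFS of contractive similitudes is of
bounded degree, then `S_x ≠ S_y` for any two distinct finite words `x, y`. -/
theorem bounded_degree_implies_distinct_maps {d N : ℕ} (hN : 2 ≤ N)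
    (S : Fin N → Euc d → Euc d) (ρ : Fin N → ℝ) (r κ : ℝ) (K : Set (Euc d))
    (hρ0 : ∀ j, 0 < ρ j) (hρ1 : ∀ j, ρ j < 1)
    (hsim : ∀ j a b, dist (S j a) (S j b) = ρ j * dist a b)
    (hr : IsLeast (Set.range ρ) r) (hκ : 0 < κ)
    (hKc : IsCompact K) (hKne : K.Nonempty) (hKinv : K = ⋃ j, S j '' K)
    (hbd : BddDeg (augIFS S ρ r κ K)) :
    ∀ x y : List (Fin N), x ≠ y → sWord S x ≠ sWord S y :=
  bounded_degree_implies_distinct_maps_general hN S ρ r κ K hρ0 hρ1 hsim hr hκ hKne hbd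

end HypIFS
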